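/- arXiv:2602.12605 — 3 statements merged into one kernel-verified Lean document; each statement's English description precedes it below -/
import Mathlib

section
/- Let P and Q be probability measures on a measurable space with P absolutely continuous with respect to Q, and let g be a measurable function such that exp(g) is Q-integrable and g is P-integrable. Then E_P[g] ≤ log E_Q[exp(g)] + KL(P‖Q), where KL(P‖Q) denotes the Kullback–Leibler divergence. -/
open MeasureTheory Real

/-- Donsker–Varadhan inequality: `E_P[g] ≤ log E_Q[exp g] + KL(P‖Q)`, where
`KL(P‖Q) = E_P[log dP/dQ]`. -/
theorem donsker_varadhan {α : Type*} [MeasurableSpace α]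
    (P Q : Measure α) [IsProbabilityMeasure P] [IsProbabilityMeasure Q]
    (hac : P ≪ Q) (g : α → ℝ) (hg : Measurable g)
    (hexp : Integrable (fun x => Real.exp (g x)) Q)
    (hgP : Integrable g P)
    (hkl : Integrable (fun x => Real.log (P.rnDeriv Q x).toReal) P) :
    ∫ x, g x ∂P ≤
      Real.log (∫ x, Real.exp (g x) ∂Q) +
        ∫ x, Real.log (P.rnDeriv Q x).toReal ∂P := by
  set f : α → ℝ := fun x => (P.rnDeriv Q x).toReal with hf
  set h : α → ℝ := fun x => g x - Real.log (f x) with hh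
  have hfmeas : Measurable f := (Measure.measurable_rnDeriv P Q).ennreal_toReal
  have hhmeas : Measurable h := hg.sub (hfmeas.log)
  have hhint : Integrable h P := hgP.sub hkl
  -- key pointwise a.e. (w.r.t. Q) bound on lintegrals
  have hkey : ∀ᵐ x ∂Q, P.rnDeriv Q x * ENNReal.ofReal (Real.exp (h x))
      ≤ ENNReal.ofReal (Real.exp (g x)) := by
    filter_upwards [Measure.rnDeriv_lt_top P Q] with x hlt
    rcases eq_or_ne (P.rnDeriv Q x) 0 with h0 | h0
    · simp [h0]
    · have hpos : 0 < f x := ENNReal.toReal_pos h0 hlt.ne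
      have : Real.exp (h x) = Real.exp (g x) * (f x)⁻¹ := by
        rw [hh]; simp only [Real.exp_sub, Real.exp_log hpos, div_eq_mul_inv]
      rw [this, ← ENNReal.ofReal_toReal hlt.ne, ← ENNReal.ofReal_mul ENNReal.toReal_nonneg]
      refine le_of_eq (congrArg _ ?_)
      field_simp
      rfl
  have hlint_eq : ∫⁻ x, P.rnDeriv Q x * ENNReal.ofReal (Real.exp (h x)) ∂Q
      = ∫⁻ x, ENNReal.ofReal (Real.exp (h x)) ∂P :=
    MeasureTheory.lintegral_rnDeriv_mul hac
      (ENNReal.measurable_ofReal.comp (Real.measurable_exp.comp hhmeas)).aemeasurable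
  have hgfin : ∫⁻ x, ENNReal.ofReal (Real.exp (g x)) ∂Q < ⊤ := by
    have := hexp.hasFiniteIntegral
    rwa [hasFiniteIntegral_iff_ofReal (Filter.Eventually.of_forall fun x => (Real.exp_pos _).le)]
      at this
  have hlin_le : ∫⁻ x, ENNReal.ofReal (Real.exp (h x)) ∂P
      ≤ ∫⁻ x, ENNReal.ofReal (Real.exp (g x)) ∂Q := by
    rw [← hlint_eq]; exact lintegral_mono_ae hkey
  have hexpint : Integrable (fun x => Real.exp (h x)) P := by
    refine ⟨(Real.measurable_exp.comp hhmeas).aestronglyMeasurable, ?_⟩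
    rw [hasFiniteIntegral_iff_ofReal (Filter.Eventually.of_forall fun x => (Real.exp_pos _).le)]
    exact lt_of_le_of_lt hlin_le hgfin
  -- integral comparison
  have hint_le : ∫ x, Real.exp (h x) ∂P ≤ ∫ x, Real.exp (g x) ∂Q := by
    rw [integral_eq_lintegral_of_nonneg_ae
        (Filter.Eventually.of_forall fun x => (Real.exp_pos _).le)
        (Real.measurable_exp.comp hhmeas).aestronglyMeasurable,
      integral_eq_lintegral_of_nonneg_ae
        (Filter.Eventually.of_forall fun x => (Real.exp_pos _).le)
        (Real.measurable_exp.comp hg).aestronglyMeasurable]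
    exact ENNReal.toReal_mono hgfin.ne hlin_le
  -- Jensen
  have hjensen : Real.exp (∫ x, h x ∂P) ≤ ∫ x, Real.exp (h x) ∂P :=
    convexOn_exp.map_integral_le continuous_exp.continuousOn isClosed_univ
      (Filter.Eventually.of_forall fun x => Set.mem_univ _) hhint hexpint
  have hP0 : 0 < ∫ x, Real.exp (h x) ∂P := integral_exp_pos hexpint
  have : ∫ x, h x ∂P ≤ Real.log (∫ x, Real.exp (g x) ∂Q) := by
    calc ∫ x, h x ∂P = Real.log (Real.exp (∫ x, h x ∂P)) := (Real.log_exp _).symm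
      _ ≤ Real.log (∫ x, Real.exp (h x) ∂P) := Real.log_le_log (Real.exp_pos _) hjensen
      _ ≤ Real.log (∫ x, Real.exp (g x) ∂Q) := Real.log_le_log hP0 hint_le
  have hsub : ∫ x, h x ∂P = ∫ x, g x ∂P - ∫ x, Real.log (f x) ∂P := integral_sub hgP hkl
  rw [hsub] at this
  linarith
end

section
/- Let β > 0, λ' = m ≥ 1 an integer, L ∈ [0,1], and let X be Binomial(m, L). Define C_β(r,s) = −log(1 − (1 − exp(−β))·s) − β·r. Then E[exp(m·C_β(X/m, L))] ≤ 1, i.e., (1 + L(exp(−β·m/m) − 1))^m / (1 + L(exp(−β) − 1))^m ≤ 1 holds with equality. -/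
open Finset

/-- For the Catoni comparator `C_β(r,s) = −log(1 − (1 − e^{−β})s) − βr` and
`X ∼ Binomial(m, L)` with `L ∈ [0,1]`, `β > 0`, `m ≥ 1`, one has
`E[exp(m · C_β(X/m, L))] = 1` (in particular `≤ 1`). -/
theorem catoni_binomial_mgf_eq_one (β : ℝ) (hβ : 0 < β) (m : ℕ) (hm : 1 ≤ m)
    (L : ℝ) (hL : L ∈ Set.Icc (0 : ℝ) 1) :
    ∑ k ∈ Finset.range (m + 1),
        (m.choose k : ℝ) * L ^ k * (1 - L) ^ (m - k) *
          Real.exp ((m : ℝ) *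
            (-Real.log (1 - (1 - Real.exp (-β)) * L) - β * ((k : ℝ) / m)))
      = 1 := by
  obtain ⟨hL0, hL1⟩ := hL
  set a : ℝ := 1 - (1 - Real.exp (-β)) * L with ha
  have hexp : (0 : ℝ) < Real.exp (-β) := Real.exp_pos _
  have ha0 : 0 < a := by
    have : (1 - Real.exp (-β)) * L ≤ 1 * 1 := by
      apply mul_le_mul _ hL1 hL0 zero_le_one
      nlinarith
    nlinarith [mul_nonneg hexp.le hL0]
  have hm0 : (m : ℝ) ≠ 0 := by positivity
  have key : ∀ k ∈ Finset.range (m + 1),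
      (m.choose k : ℝ) * L ^ k * (1 - L) ^ (m - k) *
        Real.exp ((m : ℝ) * (-Real.log a - β * ((k : ℝ) / m)))
      = (a ^ m)⁻¹ * ((L * Real.exp (-β)) ^ k * (1 - L) ^ (m - k) * (m.choose k : ℝ)) := by
    intro k _
    have h1 : (m : ℝ) * (-Real.log a - β * ((k : ℝ) / m))
        = (-(k : ℝ)) * β + (m : ℝ) * (-Real.log a) := by
      field_simp; ring
    rw [h1, Real.exp_add]
    have h2 : Real.exp ((m : ℝ) * (-Real.log a)) = (a ^ m)⁻¹ := by
      rw [mul_neg, Real.exp_neg, ← Real.exp_log ha0, ← Real.exp_nat_mul]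
      simp
    have h3 : Real.exp ((-(k : ℝ)) * β) = Real.exp (-β) ^ k := by
      rw [← Real.exp_nat_mul]; ring_nf
    rw [h2, h3, mul_pow]
    ring
  rw [Finset.sum_congr rfl key, ← Finset.mul_sum, ← add_pow]
  have : L * Real.exp (-β) + (1 - L) = a := by rw [ha]; ring
  rw [this, inv_mul_cancel₀ (by positivity)]
end

section
/- Let X₁,…,X_k be i.i.d. random variables with values in [0,1], and X′₁,…,X′_k i.i.d. Bernoulli random variables with E[X′₁] = E[X₁]. Then for any convex function f : [0,1]^k → ℝ, E[f(X₁,…,X_k)] ≤ E[f(X′₁,…,X′_k)]. -/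
open MeasureTheory ProbabilityTheory

noncomputable section

def mcube (n : ℕ) : Set (Fin n → ℝ) := Set.pi Set.univ fun _ => Set.Icc (0 : ℝ) 1

def mins {n : ℕ} (i : Fin (n+1)) (x : ℝ) (y : Fin n → ℝ) : Fin (n+1) → ℝ := i.insertNth x y

lemma mins_apply_same {n : ℕ} (i : Fin (n+1)) (x : ℝ) (y : Fin n → ℝ) : mins i x y i = x := by
  simp [mins]

lemma mins_apply_succAbove {n : ℕ} (i : Fin (n+1)) (x : ℝ) (y : Fin n → ℝ) (m : Fin n) :
    mins i x y (i.succAbove m) = y m := by simp [mins]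

lemma mins_self_removeNth {n : ℕ} (i : Fin (n+1)) (x : Fin (n+1) → ℝ) :
    mins i (x i) (i.removeNth x) = x := Fin.insertNth_self_removeNth i x

lemma mlem_insertNth_lin {n : ℕ} (i : Fin (n+1)) (a b x1 x2 : ℝ) (y1 y2 : Fin n → ℝ) :
    a • mins i x1 y1 + b • mins i x2 y2 = mins i (a*x1 + b*x2) (a • y1 + b • y2) := by
  funext j
  by_cases h : j = i
  · subst h; simp [mins]
  · obtain ⟨m, rfl⟩ := Fin.exists_succAbove_eq h
    simp [mins]

lemma mlem_insertNth_mem {n : ℕ} (i : Fin (n+1)) {x : ℝ} {y : Fin n → ℝ}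
    (hx : x ∈ Set.Icc (0:ℝ) 1) (hy : y ∈ mcube n) : mins i x y ∈ mcube (n+1) := by
  intro j _
  by_cases h : j = i
  · subst h; simpa [mins] using hx
  · obtain ⟨m, rfl⟩ := Fin.exists_succAbove_eq h
    simpa [mins] using hy m (Set.mem_univ m)

lemma mlem_convexOn_right {n : ℕ} {f : (Fin (n+1) → ℝ) → ℝ}
    (hf : ConvexOn ℝ (mcube (n+1)) f) (i : Fin (n+1)) {x : ℝ} (hx : x ∈ Set.Icc (0:ℝ) 1) :
    ConvexOn ℝ (mcube n) fun y => f (mins i x y) := by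
  constructor
  · exact convex_pi fun _ _ => convex_Icc 0 1
  · intro y1 hy1 y2 hy2 a b ha hb hab
    have h := hf.2 (mlem_insertNth_mem i hx hy1) (mlem_insertNth_mem i hx hy2) ha hb hab
    have hx' : a * x + b * x = x := by rw [← add_mul, hab, one_mul]
    rwa [mlem_insertNth_lin, hx'] at h

lemma mlem_convexOn_left {n : ℕ} {f : (Fin (n+1) → ℝ) → ℝ}
    (hf : ConvexOn ℝ (mcube (n+1)) f) (i : Fin (n+1)) {y : Fin n → ℝ} (hy : y ∈ mcube n) :
    ConvexOn ℝ (Set.Icc (0:ℝ) 1) fun x => f (mins i x y) := by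
  constructor
  · exact convex_Icc 0 1
  · intro x1 hx1 x2 hx2 a b ha hb hab
    have h := hf.2 (mlem_insertNth_mem i hx1 hy) (mlem_insertNth_mem i hx2 hy) ha hb hab
    have hy' : a • y + b • y = y := by rw [← add_smul, hab, one_smul]
    rwa [mlem_insertNth_lin, hy', smul_eq_mul, smul_eq_mul] at h

lemma mlem_bddAbove : ∀ (n : ℕ) (f : (Fin n → ℝ) → ℝ), ConvexOn ℝ (mcube n) f →
    ∃ B, ∀ x ∈ mcube n, f x ≤ B := by
  intro n
  induction n with
  | zero =>
    intro f _
    exact ⟨f default, fun x _ => by rw [Subsingleton.elim x default]⟩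
  | succ n ih =>
    intro f hf
    obtain ⟨B0, hB0⟩ := ih _ (mlem_convexOn_right hf 0 (Set.left_mem_Icc.2 zero_le_one))
    obtain ⟨B1, hB1⟩ := ih _ (mlem_convexOn_right hf 0 (Set.right_mem_Icc.2 zero_le_one))
    refine ⟨max B0 B1, fun x hx => ?_⟩
    set t := x 0 with ht
    have htI : t ∈ Set.Icc (0:ℝ) 1 := hx 0 (Set.mem_univ 0)
    set r : Fin n → ℝ := Fin.removeNth 0 x with hr
    have hrm : r ∈ mcube n := fun m _ => hx _ (Set.mem_univ _)
    have hxeq : (1 - t) • (mins 0 0 r) + t • (mins 0 1 r) = x := by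
      rw [mlem_insertNth_lin]
      have : (1 - t) • r + t • r = r := by rw [← add_smul]; simp
      rw [this]
      simp only [mul_zero, mul_one, zero_add]
      rw [ht, hr, mins_self_removeNth]
    have h := hf.2 (mlem_insertNth_mem 0 (Set.left_mem_Icc.2 zero_le_one) hrm)
      (mlem_insertNth_mem 0 (Set.right_mem_Icc.2 zero_le_one) hrm)
      (by linarith [htI.2] : (0:ℝ) ≤ 1 - t) htI.1 (by ring)
    rw [hxeq] at h
    have h0 := hB0 r hrm
    have h1 := hB1 r hrm
    have e0 : f (mins 0 0 r) ≤ max B0 B1 := le_trans h0 (le_max_left _ _)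
    have e1 : f (mins 0 1 r) ≤ max B0 B1 := le_trans h1 (le_max_right _ _)
    have := htI.1; have := htI.2
    calc f x ≤ (1 - t) • f (mins 0 0 r) + t • f (mins 0 1 r) := h
    _ ≤ (1 - t) * max B0 B1 + t * max B0 B1 := by
        simp only [smul_eq_mul]
        gcongr <;> linarith
    _ = max B0 B1 := by ring

lemma mlem_abs_bdd {n : ℕ} (f : (Fin n → ℝ) → ℝ) (hf : ConvexOn ℝ (mcube n) f) :
    ∃ M, 0 ≤ M ∧ ∀ x ∈ mcube n, |f x| ≤ M := by
  obtain ⟨B, hB⟩ := mlem_bddAbove n f hf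
  set c : Fin n → ℝ := fun _ => 1/2 with hc
  have hcm : c ∈ mcube n := fun j _ => by norm_num [hc]
  refine ⟨max B (B - 2 * f c) + |B| - B, ?_, fun x hx => ?_⟩
  · have h1 : B ≤ max B (B - 2 * f c) := le_max_left _ _
    have h2 : -|B| ≤ B := neg_abs_le B
    have h3 : (0:ℝ) ≤ |B| := abs_nonneg B
    linarith
  · set x' : Fin n → ℝ := fun j => 1 - x j with hx'
    have hx'm : x' ∈ mcube n := fun j _ => by
      have := hx j (Set.mem_univ j); simp only [hx']
      constructor <;> [linarith [(hx j (Set.mem_univ j)).2]; linarith [(hx j (Set.mem_univ j)).1]]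
    have hmid : (1/2 : ℝ) • x + (1/2 : ℝ) • x' = c := by
      funext j; simp only [Pi.add_apply, Pi.smul_apply, smul_eq_mul, hx', hc]; ring
    have h := hf.2 hx hx'm (by norm_num : (0:ℝ) ≤ 1/2) (by norm_num : (0:ℝ) ≤ 1/2) (by norm_num : (1/2:ℝ) + 1/2 = 1)
    rw [hmid] at h
    have hup := hB x hx
    have hup' := hB x' hx'm
    have hlow : 2 * f c - B ≤ f x := by
      simp only [smul_eq_mul] at h; linarith
    rw [abs_le]
    constructor
    · have h1 : B - 2 * f c ≤ max B (B - 2 * f c) := le_max_right _ _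
      have h2 : B ≤ |B| := le_abs_self B
      linarith
    · have h1 : B ≤ max B (B - 2 * f c) := le_max_left _ _
      have : B ≤ |B| := le_abs_self B
      linarith

def mbv (b : Bool) : ℝ := bif b then 1 else 0

lemma mbv_mem (b : Bool) : mbv b ∈ Set.Icc (0:ℝ) 1 := by cases b <;> norm_num [mbv]

lemma mlem_meas : ∀ (n : ℕ) (f : (Fin n → ℝ) → ℝ), ConvexOn ℝ (mcube n) f →
    ∃ g : (Fin n → ℝ) → ℝ, Measurable g ∧ ∀ x ∈ mcube n, g x = f x := by
  intro n
  induction n with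
  | zero =>
    intro f _
    exact ⟨fun _ => f default, measurable_const, fun x _ => by rw [Subsingleton.elim x default]⟩
  | succ n ih =>
    intro f hf
    classical
    -- interior part
    set U := interior (mcube (n+1)) with hU
    have hUopen : IsOpen U := isOpen_interior
    have hUmeas : MeasurableSet U := hUopen.measurableSet
    have hfc : ContinuousOn f U := hf.continuousOn_interior
    have hrestr : Measurable (U.restrict f) :=
      (continuousOn_iff_continuous_restrict.mp hfc).measurable
    obtain ⟨h, hhmeas, hhext⟩ :=
      (MeasurableEmbedding.subtype_coe hUmeas).exists_measurable_extend hrestr (fun _ => ⟨0⟩)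
    have hhU : ∀ x ∈ U, h x = f x := by
      intro x hx
      have := congrFun hhext ⟨x, hx⟩
      exact this
    -- face parts
    have H : ∀ p : Fin (n+1) × Bool, ∃ g : (Fin n → ℝ) → ℝ, Measurable g ∧
        ∀ y ∈ mcube n, g y = f (mins p.1 (mbv p.2) y) :=
      fun p => ih _ (mlem_convexOn_right hf p.1 (mbv_mem p.2))
    choose G hGmeas hGeq using H
    have hrem : ∀ i : Fin (n+1), Measurable fun x : Fin (n+1) → ℝ => i.removeNth x := by
      intro i
      rw [measurable_pi_iff]
      intro m
      exact measurable_pi_apply _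
    set num : (Fin (n+1) → ℝ) → ℝ :=
      fun x => ∑ p : Fin (n+1) × Bool, if x p.1 = mbv p.2 then G p (p.1.removeNth x) else 0 with hnum
    set den : (Fin (n+1) → ℝ) → ℝ :=
      fun x => ∑ p : Fin (n+1) × Bool, if x p.1 = mbv p.2 then (1:ℝ) else 0 with hden
    have hact : ∀ p : Fin (n+1) × Bool, MeasurableSet {x : Fin (n+1) → ℝ | x p.1 = mbv p.2} :=
      fun p => show MeasurableSet ((fun x : Fin (n+1) → ℝ => x p.1) ⁻¹' {mbv p.2}) from
        (measurable_pi_apply p.1) (measurableSet_singleton (mbv p.2))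
    have hnummeas : Measurable num := by
      apply Finset.measurable_sum
      intro p _
      exact Measurable.ite (hact p) ((hGmeas p).comp (hrem p.1)) measurable_const
    have hdenmeas : Measurable den := by
      apply Finset.measurable_sum
      intro p _
      exact Measurable.ite (hact p) measurable_const measurable_const
    refine ⟨U.piecewise h (fun x => num x / den x), ?_, ?_⟩
    · exact Measurable.piecewise hUmeas hhmeas (hnummeas.div hdenmeas)
    · intro x hx
      by_cases hxU : x ∈ U
      · rw [Set.piecewise_eq_of_mem _ _ _ hxU]
        exact hhU x hxU
      · rw [Set.piecewise_eq_of_notMem _ _ _ hxU]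
        -- x is on the boundary: some coordinate is 0 or 1
        have hbd : ∃ i, x i = 0 ∨ x i = 1 := by
          by_contra hcon
          push_neg at hcon
          apply hxU
          have hmem : x ∈ Set.pi Set.univ fun _ : Fin (n+1) => Set.Ioo (0:ℝ) 1 := by
            intro j _
            obtain ⟨h0, h1⟩ := hx j (Set.mem_univ j)
            exact ⟨lt_of_le_of_ne h0 (Ne.symm (hcon j).1), lt_of_le_of_ne h1 (hcon j).2⟩
          refine interior_maximal ?_ (isOpen_set_pi Set.finite_univ fun i _ => isOpen_Ioo) hmem
          exact Set.pi_mono fun i _ => Set.Ioo_subset_Icc_self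
        -- active terms equal f x
        have hterm : ∀ p : Fin (n+1) × Bool,
            (if x p.1 = mbv p.2 then G p (p.1.removeNth x) else 0) =
            (if x p.1 = mbv p.2 then (1:ℝ) else 0) * f x := by
          intro p
          by_cases hp : x p.1 = mbv p.2
          · rw [if_pos hp, if_pos hp, one_mul]
            have hrm : p.1.removeNth x ∈ mcube n := fun m _ => hx _ (Set.mem_univ _)
            rw [hGeq p _ hrm, ← hp, mins_self_removeNth]
          · rw [if_neg hp, if_neg hp, zero_mul]
        have hnumx : num x = den x * f x := by
          rw [hnum, hden]
          simp only
          rw [Finset.sum_mul]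
          exact Finset.sum_congr rfl fun p _ => hterm p
        have hdenpos : 0 < den x := by
          obtain ⟨i, hi⟩ := hbd
          have hp0 : ∃ p : Fin (n+1) × Bool, x p.1 = mbv p.2 := by
            rcases hi with hi | hi
            · exact ⟨(i, false), by simpa [mbv] using hi⟩
            · exact ⟨(i, true), by simpa [mbv] using hi⟩
          obtain ⟨p0, hp0⟩ := hp0
          rw [hden]
          refine Finset.sum_pos' (fun p _ => by positivity) ⟨p0, Finset.mem_univ p0, ?_⟩
          rw [if_pos hp0]; norm_num
        rw [hnumx, mul_comm, mul_div_assoc, div_self (ne_of_gt hdenpos), mul_one]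

lemma mlem_ext {n : ℕ} (f : (Fin n → ℝ) → ℝ) (hf : ConvexOn ℝ (mcube n) f) :
    ∃ (g : (Fin n → ℝ) → ℝ) (M : ℝ), Measurable g ∧ (∀ x, |g x| ≤ M) ∧
      ∀ x ∈ mcube n, g x = f x := by
  obtain ⟨M, hM0, hM⟩ := mlem_abs_bdd f hf
  obtain ⟨g0, hg0meas, hg0eq⟩ := mlem_meas n f hf
  refine ⟨fun x => max (-M) (min M (g0 x)), M, ?_, ?_, ?_⟩
  · exact measurable_const.max (measurable_const.min hg0meas)
  · intro x
    rw [abs_le]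
    refine ⟨le_max_left _ _, max_le (by linarith) (min_le_left _ _)⟩
  · intro x hx
    have h1 := hM x hx
    rw [abs_le] at h1
    show max (-M) (min M (g0 x)) = f x
    rw [hg0eq x hx, min_eq_right h1.2, max_eq_right h1.1]

lemma mlem_convexOn_congr {n : ℕ} {f g : (Fin n → ℝ) → ℝ} (hf : ConvexOn ℝ (mcube n) f)
    (heq : ∀ x ∈ mcube n, g x = f x) : ConvexOn ℝ (mcube n) g := by
  refine ⟨hf.1, fun x hx y hy a b ha hb hab => ?_⟩
  rw [heq x hx, heq y hy, heq _ (hf.1 hx hy ha hb hab)]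
  exact hf.2 hx hy ha hb hab

lemma mlem_integrable {α : Type*} [MeasurableSpace α] (μ : Measure α) [IsFiniteMeasure μ]
    {g : α → ℝ} {M : ℝ} (hg : AEStronglyMeasurable g μ) (h : ∀ᵐ x ∂μ, |g x| ≤ M) :
    Integrable g μ :=
  ⟨hg, HasFiniteIntegral.of_bounded (C := M) (by simpa [Real.norm_eq_abs] using h)⟩

lemma mins_measurable {n : ℕ} (i : Fin (n+1)) :
    Measurable fun q : ℝ × (Fin n → ℝ) => mins i q.1 q.2 := by
  rw [measurable_pi_iff]
  intro j
  by_cases h : j = i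
  · subst h; simpa [mins] using measurable_fst
  · obtain ⟨m, rfl⟩ := Fin.exists_succAbove_eq h
    simp [mins]; exact (measurable_pi_apply m).comp measurable_snd

lemma mlem_oneDim (ν ν' : Measure ℝ) [IsProbabilityMeasure ν] [IsProbabilityMeasure ν']
    (hν : ∀ᵐ x ∂ν, x ∈ Set.Icc (0:ℝ) 1) (hν' : ∀ᵐ x ∂ν', x = 0 ∨ x = 1)
    (hm : ∫ x, x ∂ν' = ∫ x, x ∂ν)
    (g : ℝ → ℝ) (hg : Measurable g) (M : ℝ) (hbd : ∀ x, |g x| ≤ M)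
    (hconv : ∀ t ∈ Set.Icc (0:ℝ) 1, g t ≤ (1-t) * g 0 + t * g 1) :
    ∫ x, g x ∂ν ≤ ∫ x, g x ∂ν' := by
  set F : ℝ → ℝ := fun x => g 0 + x * (g 1 - g 0) with hF
  have hidν : Integrable (fun x : ℝ => x) ν := by
    refine mlem_integrable (M := 1) ν measurable_id.aestronglyMeasurable ?_
    filter_upwards [hν] with x hx
    rw [abs_le]; exact ⟨by linarith [hx.1], hx.2⟩
  have hidν' : Integrable (fun x : ℝ => x) ν' := by
    refine mlem_integrable (M := 1) ν' measurable_id.aestronglyMeasurable ?_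
    filter_upwards [hν'] with x hx
    rcases hx with h | h <;> rw [h] <;> norm_num
  have hFint : Integrable F ν := (integrable_const (g 0)).add (hidν.mul_const _)
  have hFint' : Integrable F ν' := (integrable_const (g 0)).add (hidν'.mul_const _)
  have hgν : Integrable g ν :=
    mlem_integrable ν hg.aestronglyMeasurable (Filter.Eventually.of_forall hbd)
  have hFval : ∀ (m : Measure ℝ) (_ : IsProbabilityMeasure m) (h : Integrable (fun x:ℝ => x) m),
      ∫ x, F x ∂m = g 0 + (∫ x, x ∂m) * (g 1 - g 0) := by
    intro m hm hint
    rw [hF]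
    rw [integral_add (integrable_const _) (hint.mul_const _)]
    rw [integral_const, integral_mul_const]
    simp [measure_univ]
  have step1 : ∫ x, g x ∂ν ≤ ∫ x, F x ∂ν := by
    refine integral_mono_ae hgν hFint ?_
    filter_upwards [hν] with x hx
    have := hconv x hx
    rw [hF]; simp only; linarith
  have step2 : ∫ x, g x ∂ν' = ∫ x, F x ∂ν' := by
    refine integral_congr_ae ?_
    filter_upwards [hν'] with x hx
    rcases hx with h | h <;> rw [h] <;> simp [hF]
  rw [hFval ν inferInstance hidν] at step1
  rw [step2, hFval ν' inferInstance hidν', hm]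
  exact step1

lemma mlem_pi_ae (ν : Measure ℝ) [IsProbabilityMeasure ν]
    (hν : ∀ᵐ x ∂ν, x ∈ Set.Icc (0:ℝ) 1) (n : ℕ) :
    ∀ᵐ y ∂(Measure.pi fun _ : Fin n => ν), y ∈ mcube n := by
  have h0 : ν {x | ¬ x ∈ Set.Icc (0:ℝ) 1} = 0 := ae_iff.mp hν
  have h1 : ν (Set.Icc (0:ℝ) 1) = 1 := by
    rw [← prob_compl_eq_zero_iff measurableSet_Icc]
    exact h0
  have hmeas : MeasurableSet (mcube n) := MeasurableSet.univ_pi fun _ => measurableSet_Icc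
  rw [ae_iff]
  have : {y : Fin n → ℝ | ¬ y ∈ mcube n} = (mcube n)ᶜ := rfl
  rw [this, prob_compl_eq_zero_iff hmeas]
  rw [show mcube n = Set.pi Set.univ fun _ : Fin n => Set.Icc (0:ℝ) 1 from rfl]
  rw [Measure.pi_pi]
  simp [h1]

lemma mlem_int_bd {β : Type*} [MeasurableSpace β] (m : Measure β) [IsProbabilityMeasure m]
    (h : β → ℝ) {M : ℝ} (hb : ∀ y, |h y| ≤ M) : |∫ y, h y ∂m| ≤ M := by
  have := norm_integral_le_of_norm_le_const (μ := m) (f := h) (C := M)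
    (Filter.Eventually.of_forall (by simpa [Real.norm_eq_abs] using hb))
  simpa [Real.norm_eq_abs, measure_univ] using this

lemma mlem_key (ν ν' : Measure ℝ) [IsProbabilityMeasure ν] [IsProbabilityMeasure ν']
    (hν : ∀ᵐ x ∂ν, x ∈ Set.Icc (0:ℝ) 1) (hν' : ∀ᵐ x ∂ν', x = 0 ∨ x = 1)
    (hm : ∫ x, x ∂ν' = ∫ x, x ∂ν) :
    ∀ (n : ℕ) (g : (Fin n → ℝ) → ℝ) (M : ℝ), Measurable g → (∀ x, |g x| ≤ M) →
      ConvexOn ℝ (mcube n) g →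
      ∫ x, g x ∂(Measure.pi fun _ : Fin n => ν) ≤ ∫ x, g x ∂(Measure.pi fun _ : Fin n => ν') := by
  intro n
  induction n with
  | zero =>
    intro g M _ _ _
    have hgc : g = fun _ => g default := funext fun x => by rw [Subsingleton.elim x default]
    apply le_of_eq
    rw [hgc, integral_const, integral_const]
    simp [measure_univ]
  | succ n ih =>
    intro g M hgmeas hgbd hgconv
    have hν'I : ∀ᵐ x ∂ν', x ∈ Set.Icc (0:ℝ) 1 := by
      filter_upwards [hν'] with x hx
      rcases hx with h | h <;> rw [h] <;> norm_num
    set πn := Measure.pi fun _ : Fin n => ν with hπn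
    set πn' := Measure.pi fun _ : Fin n => ν' with hπn'
    set G : ℝ × (Fin n → ℝ) → ℝ := fun q => g (mins 0 q.1 q.2) with hG
    have hGmeas : Measurable G := hgmeas.comp (mins_measurable 0)
    have hGbd : ∀ q, |G q| ≤ M := fun q => hgbd _
    have hGint1 : Integrable G (ν.prod πn) :=
      mlem_integrable _ hGmeas.aestronglyMeasurable (Filter.Eventually.of_forall hGbd)
    have hGint2 : Integrable G (ν.prod πn') :=
      mlem_integrable _ hGmeas.aestronglyMeasurable (Filter.Eventually.of_forall hGbd)
    have hGint3 : Integrable G (ν'.prod πn') :=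
      mlem_integrable _ hGmeas.aestronglyMeasurable (Filter.Eventually.of_forall hGbd)
    have h1 : ∫ x, g x ∂(Measure.pi fun _ : Fin (n+1) => ν) = ∫ q, G q ∂(ν.prod πn) := by
      rw [← (measurePreserving_piFinSuccAbove (fun _ : Fin (n+1) => ν) 0).integral_comp'
        (f := MeasurableEquiv.piFinSuccAbove (fun _ : Fin (n+1) => ℝ) 0) G]
      refine integral_congr_ae (Filter.Eventually.of_forall fun x => ?_)
      show g x = G (x 0, (0 : Fin (n+1)).removeNth x)
      rw [hG]
      show g x = g (mins 0 (x 0) ((0 : Fin (n+1)).removeNth x))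
      rw [mins_self_removeNth]
    have h1' : ∫ x, g x ∂(Measure.pi fun _ : Fin (n+1) => ν') = ∫ q, G q ∂(ν'.prod πn') := by
      rw [← (measurePreserving_piFinSuccAbove (fun _ : Fin (n+1) => ν') 0).integral_comp'
        (f := MeasurableEquiv.piFinSuccAbove (fun _ : Fin (n+1) => ℝ) 0) G]
      refine integral_congr_ae (Filter.Eventually.of_forall fun x => ?_)
      show g x = G (x 0, (0 : Fin (n+1)).removeNth x)
      rw [hG]
      show g x = g (mins 0 (x 0) ((0 : Fin (n+1)).removeNth x))
      rw [mins_self_removeNth]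
    have hsm1 : AEStronglyMeasurable (fun x => ∫ y, G (x, y) ∂πn) ν :=
      (hGmeas.stronglyMeasurable.integral_prod_right').aestronglyMeasurable
    have hsm2 : AEStronglyMeasurable (fun x => ∫ y, G (x, y) ∂πn') ν :=
      (hGmeas.stronglyMeasurable.integral_prod_right').aestronglyMeasurable
    have hsm3 : AEStronglyMeasurable (fun y => ∫ x, G (x, y) ∂ν) πn' :=
      (hGmeas.stronglyMeasurable.integral_prod_left').aestronglyMeasurable
    have hsm4 : AEStronglyMeasurable (fun y => ∫ x, G (x, y) ∂ν') πn' :=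
      (hGmeas.stronglyMeasurable.integral_prod_left').aestronglyMeasurable
    have hbd1 : ∀ x, |∫ y, G (x, y) ∂πn| ≤ M := fun x => mlem_int_bd πn _ (fun y => hGbd (x, y))
    have hbd2 : ∀ x, |∫ y, G (x, y) ∂πn'| ≤ M := fun x => mlem_int_bd πn' _ (fun y => hGbd (x, y))
    have hbd3 : ∀ y, |∫ x, G (x, y) ∂ν| ≤ M := fun y => mlem_int_bd ν _ (fun x => hGbd (x, y))
    have hbd4 : ∀ y, |∫ x, G (x, y) ∂ν'| ≤ M := fun y => mlem_int_bd ν' _ (fun x => hGbd (x, y))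
    have step2 : ∫ x, ∫ y, G (x, y) ∂πn ∂ν ≤ ∫ x, ∫ y, G (x, y) ∂πn' ∂ν := by
      refine integral_mono_ae
        (mlem_integrable ν hsm1 (Filter.Eventually.of_forall hbd1))
        (mlem_integrable ν hsm2 (Filter.Eventually.of_forall hbd2)) ?_
      filter_upwards [hν] with x hx
      exact ih (fun y => G (x, y)) M (hGmeas.comp measurable_prodMk_left)
        (fun y => hGbd (x, y)) (mlem_convexOn_right hgconv 0 hx)
    have step4 : ∫ y, ∫ x, G (x, y) ∂ν ∂πn' ≤ ∫ y, ∫ x, G (x, y) ∂ν' ∂πn' := by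
      refine integral_mono_ae
        (mlem_integrable πn' hsm3 (Filter.Eventually.of_forall hbd3))
        (mlem_integrable πn' hsm4 (Filter.Eventually.of_forall hbd4)) ?_
      filter_upwards [mlem_pi_ae ν' hν'I n] with y hy
      refine mlem_oneDim ν ν' hν hν' hm (fun x => G (x, y))
        (hGmeas.comp (measurable_prodMk_right)) M (fun x => hGbd (x, y)) ?_
      intro t ht
      have hcOn := mlem_convexOn_left hgconv 0 hy
      have h2 := hcOn.2 (Set.left_mem_Icc.2 zero_le_one) (Set.right_mem_Icc.2 zero_le_one)
        (sub_nonneg.2 ht.2) ht.1 (by ring)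
      simp only [smul_eq_mul, mul_zero, mul_one, zero_add] at h2
      simpa [hG] using h2
    calc ∫ x, g x ∂(Measure.pi fun _ : Fin (n+1) => ν)
        = ∫ q, G q ∂(ν.prod πn) := h1
      _ = ∫ x, ∫ y, G (x, y) ∂πn ∂ν := integral_prod G hGint1
      _ ≤ ∫ x, ∫ y, G (x, y) ∂πn' ∂ν := step2
      _ = ∫ q, G q ∂(ν.prod πn') := (integral_prod G hGint2).symm
      _ = ∫ y, ∫ x, G (x, y) ∂ν ∂πn' := integral_prod_symm G hGint2
      _ ≤ ∫ y, ∫ x, G (x, y) ∂ν' ∂πn' := step4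
      _ = ∫ q, G q ∂(ν'.prod πn') := (integral_prod_symm G hGint3).symm
      _ = ∫ x, g x ∂(Measure.pi fun _ : Fin (n+1) => ν') := h1'.symm

lemma mlem_map_eq_pi {Ω : Type*} [MeasurableSpace Ω] (μ : Measure Ω) [IsProbabilityMeasure μ]
    {k : ℕ} (X : Fin k → Ω → ℝ) (hm : ∀ i, Measurable (X i))
    (hi : iIndepFun X μ) :
    μ.map (fun ω i => X i ω) = Measure.pi fun i => μ.map (X i) := by
  haveI : ∀ i, IsProbabilityMeasure (μ.map (X i)) := fun i =>
    Measure.isProbabilityMeasure_map (hm i).aemeasurable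
  have hvec : Measurable fun ω i => X i ω := measurable_pi_iff.2 hm
  refine (Measure.pi_eq fun s hs => ?_).symm
  rw [Measure.map_apply hvec (MeasurableSet.univ_pi hs)]
  have hpre : (fun ω i => X i ω) ⁻¹' Set.pi Set.univ s = ⋂ i ∈ Finset.univ, X i ⁻¹' s i := by
    ext ω
    simp [Set.mem_pi]
  rw [hpre, hi.measure_inter_preimage_eq_mul Finset.univ fun i _ => hs i]
  refine Finset.prod_congr rfl fun i _ => ?_
  rw [Measure.map_apply (hm i) (hs i)]

/-- Maurer's lemma: if `X₁,…,X_k` are i.i.d. with values in `[0,1]` and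
`X′₁,…,X′_k` are i.i.d. Bernoulli with `E[X′₁] = E[X₁]`, then for any convex
function `f : [0,1]^k → ℝ`,
`E[f(X₁,…,X_k)] ≤ E[f(X′₁,…,X′_k)]`. -/
theorem maurer_lemma {Ω : Type*} [MeasurableSpace Ω]
    (μ : Measure Ω) [IsProbabilityMeasure μ] (k : ℕ) (hk : 0 < k)
    (X X' : Fin k → Ω → ℝ)
    (hXmeas : ∀ i, Measurable (X i)) (hX'meas : ∀ i, Measurable (X' i))
    (hXrange : ∀ i ω, X i ω ∈ Set.Icc (0 : ℝ) 1)
    (hX'bern : ∀ i ω, X' i ω = 0 ∨ X' i ω = 1)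
    (hXindep : iIndepFun X μ)
    (hX'indep : iIndepFun X' μ)
    (hXident : ∀ i j, μ.map (X i) = μ.map (X j))
    (hX'ident : ∀ i j, μ.map (X' i) = μ.map (X' j))
    (hmean : ∫ ω, X' ⟨0, hk⟩ ω ∂μ = ∫ ω, X ⟨0, hk⟩ ω ∂μ)
    (f : (Fin k → ℝ) → ℝ)
    (hf : ConvexOn ℝ (Set.pi Set.univ fun _ => Set.Icc (0 : ℝ) 1) f) :
    ∫ ω, f (fun i => X i ω) ∂μ ≤ ∫ ω, f (fun i => X' i ω) ∂μ := by
  set i0 : Fin k := ⟨0, hk⟩ with hi0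
  set ν : Measure ℝ := μ.map (X i0) with hν
  set ν' : Measure ℝ := μ.map (X' i0) with hν'
  haveI : IsProbabilityMeasure ν := Measure.isProbabilityMeasure_map (hXmeas i0).aemeasurable
  haveI : IsProbabilityMeasure ν' := Measure.isProbabilityMeasure_map (hX'meas i0).aemeasurable
  have hfc : ConvexOn ℝ (mcube k) f := hf
  obtain ⟨g, M, hgmeas, hgbd, hgeq⟩ := mlem_ext f hfc
  have hgconv : ConvexOn ℝ (mcube k) g := mlem_convexOn_congr hfc hgeq
  -- a.e. properties of ν, ν'
  have hνI : ∀ᵐ x ∂ν, x ∈ Set.Icc (0:ℝ) 1 := by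
    rw [hν]
    exact (ae_map_iff (hXmeas i0).aemeasurable measurableSet_Icc).mpr
      (Filter.Eventually.of_forall fun ω => hXrange i0 ω)
  have hν'B : ∀ᵐ x ∂ν', x = 0 ∨ x = 1 := by
    rw [hν']
    have hms : MeasurableSet {x : ℝ | x = 0 ∨ x = 1} := by
      have : {x : ℝ | x = 0 ∨ x = 1} = {0} ∪ {1} := by
        ext x
        simp only [Set.mem_setOf_eq, Set.mem_union, Set.mem_singleton_iff]
      rw [this]
      exact (measurableSet_singleton 0).union (measurableSet_singleton 1)
    exact (ae_map_iff (hX'meas i0).aemeasurable hms).mpr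
      (Filter.Eventually.of_forall fun ω => hX'bern i0 ω)
  have hmean' : ∫ x, x ∂ν' = ∫ x, x ∂ν := by
    rw [hν, hν',
      integral_map (f := fun x : ℝ => x) (hXmeas i0).aemeasurable
        measurable_id.aestronglyMeasurable,
      integral_map (f := fun x : ℝ => x) (hX'meas i0).aemeasurable
        measurable_id.aestronglyMeasurable]
    exact hmean
  -- rewrite both sides as integrals over product measures
  have hXvec : Measurable fun ω i => X i ω := measurable_pi_iff.2 hXmeas
  have hX'vec : Measurable fun ω i => X' i ω := measurable_pi_iff.2 hX'meas
  have hXpi : μ.map (fun ω i => X i ω) = Measure.pi fun _ : Fin k => ν := by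
    rw [mlem_map_eq_pi μ X hXmeas hXindep]
    congr 1
    funext i
    rw [hν]
    exact hXident i i0
  have hX'pi : μ.map (fun ω i => X' i ω) = Measure.pi fun _ : Fin k => ν' := by
    rw [mlem_map_eq_pi μ X' hX'meas hX'indep]
    congr 1
    funext i
    rw [hν']
    exact hX'ident i i0
  have hXmem : ∀ ω, (fun i => X i ω) ∈ mcube k := fun ω i _ => hXrange i ω
  have hX'mem : ∀ ω, (fun i => X' i ω) ∈ mcube k := fun ω i _ => by
    show X' i ω ∈ Set.Icc (0:ℝ) 1
    rcases hX'bern i ω with h | h <;> rw [h] <;> norm_num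
  have hL : ∫ ω, f (fun i => X i ω) ∂μ = ∫ x, g x ∂(Measure.pi fun _ : Fin k => ν) := by
    rw [← hXpi, integral_map hXvec.aemeasurable hgmeas.aestronglyMeasurable]
    refine integral_congr_ae (Filter.Eventually.of_forall fun ω => ?_)
    exact (hgeq _ (hXmem ω)).symm
  have hR : ∫ ω, f (fun i => X' i ω) ∂μ = ∫ x, g x ∂(Measure.pi fun _ : Fin k => ν') := by
    rw [← hX'pi, integral_map hX'vec.aemeasurable hgmeas.aestronglyMeasurable]
    refine integral_congr_ae (Filter.Eventually.of_forall fun ω => ?_)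
    exact (hgeq _ (hX'mem ω)).symm
  rw [hL, hR]
  exact mlem_key ν ν' hνI hν'B hmean' k g M hgmeas hgbd hgconv
end
end
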